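/- Let Q̂(t,x) = (H(t,·)*G)(x) as above and define R̂(z) = Q̂(z) + (1/(2π)) log ‖z‖_s for z = (t,x) ≠ 0, where ‖z‖_s = (|t|² + |x|⁴)^{1/4} is the parabolic norm. Then R̂ is homogeneous of parabolic degree 0, i.e. R̂(λ²t, λx) = R̂(t,x) for all λ > 0 and all (t,x) with t ≠ 0. In particular R̂ is bounded on the set {z : ‖z‖_s = 1, t ≠ 0} if and only if it is bounded on {z : t ≠ 0}. -/

import Mathlib

open MeasureTheory

/-- The heat kernel on `ℝ²`, extended symmetrically in time. -/
noncomputable def heatK (t : ℝ) (x : EuclideanSpace ℝ (Fin 2)) : ℝ :=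
  (4 * Real.pi * |t|)⁻¹ * Real.exp (-‖x‖ ^ 2 / (4 * |t|))

/-- The two-dimensional Green's function of the Laplacian. -/
noncomputable def greenG (x : EuclideanSpace ℝ (Fin 2)) : ℝ :=
  -(1 / (2 * Real.pi)) * Real.log ‖x‖

/-- `Q̂(t,x) = (H(t,·) * G)(x)`, spatial convolution. -/
noncomputable def Qhat (t : ℝ) (x : EuclideanSpace ℝ (Fin 2)) : ℝ :=
  ∫ y, heatK t (x - y) * greenG y

/-- The parabolic norm `‖(t,x)‖_s = (|t|² + ‖x‖⁴)^{1/4}`. -/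
noncomputable def pnormTX (t : ℝ) (x : EuclideanSpace ℝ (Fin 2)) : ℝ :=
  (t ^ 2 + ‖x‖ ^ 4) ^ ((1 : ℝ) / 4)

/-- `R̂(z) = Q̂(z) + (1/(2π)) log ‖z‖_s`. -/
noncomputable def Rhat (t : ℝ) (x : EuclideanSpace ℝ (Fin 2)) : ℝ :=
  Qhat t x + (1 / (2 * Real.pi)) * Real.log (pnormTX t x)

/-! The parabolic dilation `(t, x) ↦ (c²t, c x)` multiplies `H` by `c⁻²`, the Jacobian of the
spatial substitution `y ↦ c y`, while `G (c y) = G y - (1/2π) log |c|`. Since `H(t, ·)` has unit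
mass, `Q̂` shifts by `-(1/2π) log |c|`, which cancels
`log ‖(c²t, c x)‖_s = log |c| + log ‖(t, x)‖_s`. Every point with `t ≠ 0` is such a dilate of a
point of the parabolic unit sphere, which gives the boundedness equivalence. The convolution
converges because `log ‖y‖` is locally integrable in the plane and grows only linearly against
the Gaussian tail. -/

open Metric Set Real

section AddHaarIntegrability

variable {E : Type*} [NormedAddCommGroup E] [NormedSpace ℝ E] [FiniteDimensional ℝ E]
  [MeasurableSpace E] [BorelSpace E] (μ : Measure E) [μ.IsAddHaarMeasure]

theorem integrable_norm_rpow_mul_exp_neg_mul_sq_norm [Nontrivial E] {b s : ℝ} (hb : 0 < b)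
    (hs : -(Module.finrank ℝ E : ℝ) < s) :
    Integrable (fun v : E => ‖v‖ ^ s * exp (-b * ‖v‖ ^ 2)) μ := by
  rw [integrable_fun_norm_addHaar μ (f := fun r => r ^ s * exp (-b * r ^ 2))]
  have hd : 1 ≤ Module.finrank ℝ E := Module.finrank_pos
  refine (integrableOn_rpow_mul_exp_neg_mul_sq hb (s := Module.finrank ℝ E - 1 + s)
    (by linarith)).congr_fun (fun r (hr : 0 < r) => ?_) measurableSet_Ioi
  rw [smul_eq_mul, ← mul_assoc, ← rpow_natCast, Nat.cast_sub hd, Nat.cast_one, ← rpow_add hr]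

theorem integrableOn_log_norm_unitBall (hd : 1 ≤ Module.finrank ℝ E) :
    IntegrableOn (fun y : E => log ‖y‖) (ball 0 1) μ := by
  refine integrableOn_ball_of_norm_le_rpow hd (C := 2) (α := 1 / 2)
    (by exact_mod_cast (show (1 / 2 : ℝ) < 1 by norm_num).trans_le (by exact_mod_cast hd)) ?_
    (measurable_log.comp measurable_norm).aestronglyMeasurable
  filter_upwards [ae_restrict_mem measurableSet_ball] with y hy
  have hy1 : ‖y‖ < 1 := by simpa using hy
  rw [Real.norm_eq_abs, abs_of_nonpos (log_nonpos (norm_nonneg y) hy1.le), ← log_inv,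
    rpow_neg (norm_nonneg y), ← inv_rpow (norm_nonneg y)]
  linarith [log_le_rpow_div (inv_nonneg.2 (norm_nonneg y)) (one_half_pos (α := ℝ))]

end AddHaarIntegrability

local notation "E2" => EuclideanSpace ℝ (Fin 2)

theorem heatK_eq_mul_exp (t : ℝ) (v : E2) :
    heatK t v = (4 * π * |t|)⁻¹ * exp (-(4 * |t|)⁻¹ * ‖v‖ ^ 2) := by
  rw [heatK, neg_div, div_eq_inv_mul, neg_mul]

theorem heatK_nonneg (t : ℝ) (v : E2) : 0 ≤ heatK t v := by
  unfold heatK; positivity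

theorem heatK_le (t : ℝ) (v : E2) : heatK t v ≤ (4 * π * |t|)⁻¹ := by
  rw [heatK_eq_mul_exp]
  refine mul_le_of_le_one_right (by positivity) (exp_le_one_iff.2 ?_)
  rw [neg_mul, neg_nonpos]
  positivity

theorem measurable_heatK (t : ℝ) : Measurable (heatK t) := by
  unfold heatK; fun_prop

theorem heatK_zero_left : heatK 0 = 0 := by
  ext v; simp [heatK]

theorem integrable_norm_rpow_mul_heatK {s : ℝ} (hs : -2 < s) (t : ℝ) :
    Integrable (fun v : E2 => ‖v‖ ^ s * heatK t v) := by
  rcases eq_or_ne t 0 with rfl | ht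
  · simp [heatK_zero_left]
  have h := integrable_norm_rpow_mul_exp_neg_mul_sq_norm (volume : Measure E2)
    (b := (4 * |t|)⁻¹) (by positivity) (s := s) (by simpa using hs)
  refine (h.const_mul (4 * π * |t|)⁻¹).congr (.of_forall fun v => ?_)
  simp only [heatK_eq_mul_exp]
  ring

theorem integrable_heatK (t : ℝ) : Integrable (heatK t : E2 → ℝ) := by
  simpa using integrable_norm_rpow_mul_heatK (s := 0) (by norm_num) t

theorem integrable_norm_mul_heatK (t : ℝ) : Integrable (fun v : E2 => ‖v‖ * heatK t v) := by
  simpa using integrable_norm_rpow_mul_heatK (s := 1) (by norm_num) t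

theorem integral_heatK {t : ℝ} (ht : t ≠ 0) : ∫ v : E2, heatK t v = 1 := by
  simp_rw [heatK_eq_mul_exp]
  rw [integral_const_mul, GaussianFourier.integral_rexp_neg_mul_sq_norm (by positivity),
    finrank_euclideanSpace_fin]
  have : |t| ≠ 0 := abs_ne_zero.2 ht
  field_simp
  norm_num

theorem heatK_smul (c t : ℝ) (v : E2) :
    heatK (c ^ 2 * t) (c • v) = (c ^ 2)⁻¹ * heatK t v := by
  rcases eq_or_ne c 0 with rfl | hc
  · simp [heatK]
  have h1 : |c ^ 2 * t| = c ^ 2 * |t| := by rw [abs_mul, abs_of_nonneg (sq_nonneg c)]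
  rw [heatK, heatK, h1, norm_smul, Real.norm_eq_abs, mul_pow, sq_abs,
    mul_left_comm 4, ← mul_neg, mul_div_mul_left _ _ (pow_ne_zero 2 hc),
    mul_left_comm _ (c ^ 2), mul_inv, mul_assoc]

theorem greenG_smul {c : ℝ} (hc : c ≠ 0) {y : E2} (hy : y ≠ 0) :
    greenG (c • y) = greenG y - 1 / (2 * π) * log c := by
  rw [greenG, greenG, norm_smul, Real.norm_eq_abs,
    log_mul (abs_ne_zero.2 hc) (norm_ne_zero_iff.2 hy), log_abs]
  ring

theorem abs_greenG_le_of_one_le_norm {y : E2} (hy : 1 ≤ ‖y‖) :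
    |greenG y| ≤ 1 / (2 * π) * ‖y‖ := by
  rw [greenG, abs_mul, abs_neg, abs_of_pos (by positivity), abs_of_nonneg (log_nonneg hy)]
  gcongr
  exact (log_le_sub_one_of_pos (by linarith)).trans (by linarith)

theorem integrable_heatK_sub_mul_greenG (t : ℝ) (x : E2) :
    Integrable (fun y : E2 => heatK t (x - y) * greenG y) := by
  have hK : AEStronglyMeasurable (fun y : E2 => heatK t (x - y)) :=
    ((measurable_heatK t).comp (measurable_const.sub measurable_id)).aestronglyMeasurable
  have hG : Measurable greenG := measurable_const.mul (measurable_log.comp measurable_norm)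
  have h_ball : IntegrableOn (fun y : E2 => heatK t (x - y) * greenG y) (ball 0 1) := by
    refine Integrable.bdd_mul (c := (4 * π * |t|)⁻¹)
      ((integrableOn_log_norm_unitBall volume (by simp)).const_mul _) hK.restrict
      (.of_forall fun y => ?_)
    rw [Real.norm_eq_abs, abs_of_nonneg (heatK_nonneg t _)]
    exact heatK_le t _
  have h_compl : IntegrableOn (fun y : E2 => heatK t (x - y) * greenG y) (ball 0 1)ᶜ := by
    have hdom : Integrable (fun y : E2 =>
        1 / (2 * π) * (‖x‖ * heatK t (x - y) + ‖x - y‖ * heatK t (x - y))) :=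
      ((((integrable_heatK t).comp_sub_left x).const_mul ‖x‖).add
        ((integrable_norm_mul_heatK t).comp_sub_left x)).const_mul _
    refine hdom.integrableOn.mono' (hK.mul hG.aestronglyMeasurable).restrict ?_
    filter_upwards [ae_restrict_mem measurableSet_ball.compl] with y hy
    have hy1 : 1 ≤ ‖y‖ := by simpa using hy
    have hKy := heatK_nonneg t (x - y)
    have hy_le : ‖y‖ ≤ ‖x‖ + ‖x - y‖ := by simpa using norm_sub_le x (x - y)
    calc ‖heatK t (x - y) * greenG y‖ = heatK t (x - y) * |greenG y| := by
          rw [norm_mul, Real.norm_eq_abs, Real.norm_eq_abs, abs_of_nonneg hKy]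
      _ ≤ heatK t (x - y) * (1 / (2 * π) * (‖x‖ + ‖x - y‖)) := by
          gcongr
          exact (abs_greenG_le_of_one_le_norm hy1).trans (by gcongr)
      _ = _ := by ring
  simpa using h_ball.union h_compl

theorem integral_heatK_sub_mul_greenG_sub {t : ℝ} (ht : t ≠ 0) (x : E2) (a : ℝ) :
    ∫ y : E2, heatK t (x - y) * (greenG y - a) = Qhat t x - a := by
  simp_rw [mul_sub]
  rw [integral_sub (integrable_heatK_sub_mul_greenG t x)
    (((integrable_heatK t).comp_sub_left x).mul_const a), integral_mul_const,
    integral_sub_left_eq_self (heatK t) volume x, integral_heatK ht, one_mul, Qhat]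

theorem Qhat_smul {c t : ℝ} (hc : c ≠ 0) (ht : t ≠ 0) (x : E2) :
    Qhat (c ^ 2 * t) (c • x) = Qhat t x - 1 / (2 * π) * log c := by
  have hc2 : c ^ 2 ≠ 0 := pow_ne_zero 2 hc
  have h_subst : ∫ y : E2, heatK (c ^ 2 * t) (c • x - y) * greenG y
      = c ^ 2 * ∫ y : E2, heatK (c ^ 2 * t) (c • x - c • y) * greenG (c • y) := by
    rw [Measure.integral_comp_smul volume (fun y => heatK (c ^ 2 * t) (c • x - y) * greenG y),
      finrank_euclideanSpace_fin, abs_of_nonneg (by positivity), smul_eq_mul,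
      mul_inv_cancel_left₀ hc2]
  have h_scaled : (fun y : E2 => heatK (c ^ 2 * t) (c • x - c • y) * greenG (c • y))
      =ᵐ[volume] fun y => (c ^ 2)⁻¹ * (heatK t (x - y) * (greenG y - 1 / (2 * π) * log c)) := by
    filter_upwards [Measure.ae_ne volume 0] with y hy
    rw [← smul_sub, heatK_smul, greenG_smul hc hy, mul_assoc]
  rw [Qhat, h_subst, integral_congr_ae h_scaled, integral_const_mul,
    integral_heatK_sub_mul_greenG_sub ht, mul_inv_cancel_left₀ hc2]

theorem pnormTX_pos {t : ℝ} (ht : t ≠ 0) (x : E2) : 0 < pnormTX t x :=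
  rpow_pos_of_pos (by positivity) _

theorem pnormTX_smul (c t : ℝ) (x : E2) :
    pnormTX (c ^ 2 * t) (c • x) = |c| * pnormTX t x := by
  have h : (c ^ 2 * t) ^ 2 + ‖c • x‖ ^ 4 = |c| ^ (4 : ℝ) * (t ^ 2 + ‖x‖ ^ 4) := by
    rw [norm_smul, Real.norm_eq_abs, show (4 : ℝ) = (4 : ℕ) by norm_num, rpow_natCast,
      ← sq_abs c]
    ring
  rw [pnormTX, pnormTX, h, mul_rpow (by positivity) (by positivity), ← rpow_mul (abs_nonneg c)]
  norm_num

theorem Rhat_smul {c t : ℝ} (hc : c ≠ 0) (ht : t ≠ 0) (x : E2) :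
    Rhat (c ^ 2 * t) (c • x) = Rhat t x := by
  rw [Rhat, Rhat, Qhat_smul hc ht, pnormTX_smul,
    log_mul (abs_ne_zero.2 hc) (pnormTX_pos ht x).ne', log_abs]
  ring

/-- `R̂` is homogeneous of parabolic degree `0`, i.e. `R̂(λ²t, λx) = R̂(t,x)`;
in particular it is bounded on the parabolic unit sphere (with `t ≠ 0`) if and only
if it is bounded on `{t ≠ 0}`. -/
theorem Rhat_parabolic_homogeneous_degree_zero :
    (∀ lam : ℝ, 0 < lam → ∀ t : ℝ, t ≠ 0 → ∀ x : EuclideanSpace ℝ (Fin 2),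
        Rhat (lam ^ 2 * t) (lam • x) = Rhat t x) ∧
    ((∃ M : ℝ, ∀ (t : ℝ) (x : EuclideanSpace ℝ (Fin 2)),
        t ≠ 0 → pnormTX t x = 1 → |Rhat t x| ≤ M) ↔
      (∃ M : ℝ, ∀ (t : ℝ) (x : EuclideanSpace ℝ (Fin 2)),
        t ≠ 0 → |Rhat t x| ≤ M)) := by
  refine ⟨fun lam hlam t ht x => Rhat_smul hlam.ne' ht x, ⟨fun ⟨M, hM⟩ => ⟨M, fun t x ht => ?_⟩,
    fun ⟨M, hM⟩ => ⟨M, fun t x ht _ => hM t x ht⟩⟩⟩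
  set r := pnormTX t x
  have hr : 0 < r := pnormTX_pos ht x
  have ht' : r⁻¹ ^ 2 * t ≠ 0 := by positivity
  have h_sphere : pnormTX (r⁻¹ ^ 2 * t) (r⁻¹ • x) = 1 := by
    rw [pnormTX_smul, abs_of_pos (inv_pos.2 hr), inv_mul_cancel₀ hr.ne']
  rw [← Rhat_smul (inv_ne_zero hr.ne') ht x]
  exact hM _ _ ht' h_sphere
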